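/- Let R be a ring and let θ, η be additive invariants on finite-length R-modules, with η(M) > 0 for every nonzero finite-length module M. For a nonzero module M set μ(M) = θ(M)/η(M), and call M semistable if μ(X) ≤ μ(M) for every nonzero submodule X ⊆ M. Let T be a finite-length module with a filtration 0 = T₀ ⊂ T₁ ⊂ ⋯ ⊂ T_ℓ = T whose subquotients T_k/T_{k−1} are nonzero and semistable and satisfy μ(T₁/T₀) > μ(T₂/T₁) > ⋯ > μ(T_ℓ/T_{ℓ−1}). Then for every a ∈ ℝ, letting k be the largest index with μ(T_k/T_{k−1}) > a (and k = 0 if no such index exists), the submodule T_k satisfies: every nonzero quotient Q of T_k has θ(Q) − a·η(Q) > 0, and every nonzero submodule X of T/T_k has θ(X) − a·η(X) ≤ 0. (That is, T_k is the torsion submodule of T with respect to the torsion pair (𝓘_{θ−aη}, 𝓟̄_{θ−aη}).) -/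

import Mathlib

/-!
A nonzero module `S` is semistable of slope `μ` exactly when `Semistable (θ - μ • η) S`. Such an
`S` lies in `𝓘_{θ - aη}` when `μ > a`, since every proper quotient then has `θ - μη ≥ 0` and
`η > 0`, and in `𝓟̄_{θ - aη}` when `μ ≤ a`. Both classes are closed under extensions: additivity
along `0 → X ∩ G → X → (X + G)/G → 0` splits the value of a submodule (resp. a quotient) of an
extension of `M/G` by `G` into values on a submodule (resp. a quotient) of `G` and of `M/G`.
Since the slopes decrease, `T_k` is an iterated extension of the subquotients of slope `> a`, and
`T/T_k` one of the subquotients of slope `≤ a`.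
-/

universe u

/-- An *additive invariant* on finite-length modules over a ring `R`: an assignment of a real
number to every module (whose value is only constrained on finite-length modules) that is
invariant under isomorphism and additive in short exact sequences. -/
structure AdditiveInvariant (R : Type u) [Ring R] where
  /-- The value of the invariant on a module. -/
  val : (M : Type u) → [AddCommGroup M] → [Module R M] → ℝ
  /-- Isomorphism invariance on finite-length modules. -/
  iso_inv : ∀ (M N : Type u) [AddCommGroup M] [Module R M] [AddCommGroup N] [Module R N],
    IsFiniteLength R M → (M ≃ₗ[R] N) → val M = val N
  /-- Additivity with respect to submodules and quotients, on finite-length modules. -/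
  additive : ∀ (M : Type u) [AddCommGroup M] [Module R M], IsFiniteLength R M →
    ∀ N : Submodule R M, val M = val N + val (M ⧸ N)

variable {R : Type u} [Ring R]

/-- `M` lies in `𝓘_θ`: every nonzero quotient `Q` of `M` satisfies `θ(Q) > 0`. -/
def MemI (θ : AdditiveInvariant R) (M : Type u) [AddCommGroup M] [Module R M] : Prop :=
  ∀ N : Submodule R M, N ≠ ⊤ → 0 < θ.val (M ⧸ N)

/-- `M` lies in `𝓘̄_θ`: every nonzero quotient `Q` of `M` satisfies `θ(Q) ≥ 0`. -/
def MemIbar (θ : AdditiveInvariant R) (M : Type u) [AddCommGroup M] [Module R M] : Prop :=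
  ∀ N : Submodule R M, N ≠ ⊤ → 0 ≤ θ.val (M ⧸ N)

/-- `M` lies in `𝓟_θ`: every nonzero submodule `X` of `M` satisfies `θ(X) < 0`. -/
def MemP (θ : AdditiveInvariant R) (M : Type u) [AddCommGroup M] [Module R M] : Prop :=
  ∀ X : Submodule R M, X ≠ ⊥ → θ.val X < 0

/-- `M` lies in `𝓟̄_θ`: every nonzero submodule `X` of `M` satisfies `θ(X) ≤ 0`. -/
def MemPbar (θ : AdditiveInvariant R) (M : Type u) [AddCommGroup M] [Module R M] : Prop :=
  ∀ X : Submodule R M, X ≠ ⊥ → θ.val X ≤ 0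

/-- `M` is `θ`-semistable: `θ(M) = 0` and every submodule `X` of `M` satisfies `θ(X) ≤ 0`. -/
def Semistable (θ : AdditiveInvariant R) (M : Type u) [AddCommGroup M] [Module R M] : Prop :=
  θ.val M = 0 ∧ ∀ X : Submodule R M, θ.val X ≤ 0

noncomputable def Submodule.quotientComapSubtypeEquivMapMkQ {M : Type*} [AddCommGroup M]
    [Module R M] (G X : Submodule R M) : (X ⧸ G.comap X.subtype) ≃ₗ[R] X.map G.mkQ :=
  have hker : LinearMap.ker (G.mkQ ∘ₗ X.subtype) = G.comap X.subtype := by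
    rw [LinearMap.ker_comp, Submodule.ker_mkQ]
  have hrange : LinearMap.range (G.mkQ ∘ₗ X.subtype) = X.map G.mkQ := by
    rw [LinearMap.range_comp, Submodule.range_subtype]
  (Submodule.quotEquivOfEq _ _ hker.symm).trans
    ((G.mkQ ∘ₗ X.subtype).quotKerEquivRange.trans (LinearEquiv.ofEq _ _ hrange))

namespace AdditiveInvariant

instance : Sub (AdditiveInvariant R) where
  sub θ η :=
    { val := fun M _ _ => θ.val M - η.val M
      iso_inv := fun M N _ _ _ _ hM e => by rw [θ.iso_inv M N hM e, η.iso_inv M N hM e]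
      additive := fun M _ _ hM N => by rw [θ.additive M hM N, η.additive M hM N]; ring }

instance : SMul ℝ (AdditiveInvariant R) where
  smul a η :=
    { val := fun M _ _ => a * η.val M
      iso_inv := fun M N _ _ _ _ hM e => by rw [η.iso_inv M N hM e]
      additive := fun M _ _ hM N => by rw [η.additive M hM N, mul_add] }

variable (θ η : AdditiveInvariant R) {M : Type u} [AddCommGroup M] [Module R M]

@[simp]
lemma sub_val : (θ - η).val M = θ.val M - η.val M := rfl

@[simp]
lemma smul_val (a : ℝ) : (a • η).val M = a * η.val M := rfl

def IsPositive : Prop :=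
  ∀ (M : Type u) [AddCommGroup M] [Module R M], IsFiniteLength R M → Nontrivial M → 0 < η.val M

lemma val_eq_zero_of_subsingleton [Subsingleton M] : θ.val M = 0 := by
  have hM : IsFiniteLength R M := .of_subsingleton
  have h := θ.additive M hM ⊥
  rw [θ.iso_inv (⊥ : Submodule R M) M .of_subsingleton (LinearEquiv.ofSubsingleton _ _),
    θ.iso_inv _ M (hM.of_surjective (Submodule.mkQ_surjective ⊥))
      (Submodule.quotEquivOfEqBot ⊥ rfl)] at h
  linarith

lemma val_quotient (hM : IsFiniteLength R M) (N : Submodule R M) :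
    θ.val (M ⧸ N) = θ.val M - θ.val N := by
  linarith [θ.additive M hM N]

lemma val_comap_subtype (hM : IsFiniteLength R M) (X G : Submodule R M) :
    θ.val (G.comap X.subtype) = θ.val (X ⊓ G : Submodule R M) := by
  have h := θ.iso_inv _ _ ((hM.of_injective X.injective_subtype).of_injective
    (G.comap X.subtype).injective_subtype) (X.equivSubtypeMap (G.comap X.subtype))
  rwa [Submodule.map_comap_subtype] at h

lemma val_eq_val_comap_add_val_map (hM : IsFiniteLength R M) (G X : Submodule R M) :
    θ.val X = θ.val (X.comap G.subtype) + θ.val (X.map G.mkQ) := by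
  have hX : IsFiniteLength R X := hM.of_injective X.injective_subtype
  rw [θ.additive X hX (G.comap X.subtype), θ.val_comap_subtype hM, θ.val_comap_subtype hM,
    inf_comm, θ.iso_inv _ _ (hX.of_surjective (Submodule.mkQ_surjective _))
      (Submodule.quotientComapSubtypeEquivMapMkQ G X)]

lemma val_quotient_eq_add (hM : IsFiniteLength R M) (G N : Submodule R M) :
    θ.val (M ⧸ N) = θ.val (G ⧸ N.comap G.subtype) + θ.val ((M ⧸ G) ⧸ N.map G.mkQ) := by
  have hG := hM.of_injective G.injective_subtype
  have hMG := hM.of_surjective G.mkQ_surjective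
  rw [θ.val_quotient hM, θ.val_quotient hG, θ.val_quotient hMG,
    θ.val_eq_val_comap_add_val_map hM G N]
  linarith [θ.additive M hM G]

end AdditiveInvariant

section Membership

variable {φ : AdditiveInvariant R} {M N : Type u} [AddCommGroup M] [Module R M]
  [AddCommGroup N] [Module R N]

lemma MemI.val_quotient_nonneg (h : MemI φ M) (P : Submodule R M) : 0 ≤ φ.val (M ⧸ P) := by
  by_cases hP : P = ⊤
  · have : Subsingleton (M ⧸ P) := Submodule.Quotient.subsingleton_iff.mpr hP
    rw [φ.val_eq_zero_of_subsingleton]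
  · exact (h P hP).le

lemma MemPbar.val_nonpos (h : MemPbar φ M) (X : Submodule R M) : φ.val X ≤ 0 := by
  by_cases hX : X = ⊥
  · have : Subsingleton X := by rw [hX]; infer_instance
    rw [φ.val_eq_zero_of_subsingleton]
  · exact h X hX

lemma MemI.of_linearEquiv (hM : IsFiniteLength R M) (e : M ≃ₗ[R] N) (h : MemI φ N) :
    MemI φ M := by
  intro P hP
  rw [φ.iso_inv _ _ (hM.of_surjective P.mkQ_surjective) (Submodule.Quotient.equiv P _ e rfl)]
  exact h _ ((map_eq_top_iff (Submodule.orderIsoMapComap e)).not.mpr hP)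

lemma MemPbar.of_linearEquiv (hM : IsFiniteLength R M) (e : M ≃ₗ[R] N) (h : MemPbar φ N) :
    MemPbar φ M := by
  intro X hX
  rw [φ.iso_inv _ _ (hM.of_injective X.injective_subtype) (e.submoduleMap X)]
  exact h _ ((map_eq_bot_iff (Submodule.orderIsoMapComap e)).not.mpr hX)

lemma MemI.of_extension (hM : IsFiniteLength R M) {G : Submodule R M} (hG : MemI φ G)
    (hQ : MemI φ (M ⧸ G)) : MemI φ M := by
  intro P hP
  rw [φ.val_quotient_eq_add hM G P]
  -- if `G + P = M` then `M/P` is a proper quotient of `G`, else `M/(G + P)` is one of `M/G`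
  by_cases hGP : P.map G.mkQ = ⊤
  · have : Subsingleton ((M ⧸ G) ⧸ P.map G.mkQ) := Submodule.Quotient.subsingleton_iff.mpr hGP
    have hPG : P.comap G.subtype ≠ ⊤ := fun h ↦ hP <| by
      rw [Submodule.comap_subtype_eq_top, ← sup_eq_right] at h
      rw [← h, ← Submodule.map_mkQ_eq_top, hGP]
    linarith [hG _ hPG, φ.val_eq_zero_of_subsingleton (M := (M ⧸ G) ⧸ P.map G.mkQ)]
  · linarith [hG.val_quotient_nonneg (P.comap G.subtype), hQ _ hGP]

lemma MemPbar.of_extension (hM : IsFiniteLength R M) {G : Submodule R M} (hG : MemPbar φ G)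
    (hQ : MemPbar φ (M ⧸ G)) : MemPbar φ M := fun X _ ↦ by
  rw [φ.val_eq_val_comap_add_val_map hM G X]
  linarith [hG.val_nonpos (X.comap G.subtype), hQ.val_nonpos (X.map G.mkQ)]

end Membership

section Slope

variable {θ η : AdditiveInvariant R} {S : Type u} [AddCommGroup S] [Module R S]

lemma semistable_sub_slope_smul (hη : η.IsPositive) (hS : IsFiniteLength R S) [Nontrivial S]
    (hss : ∀ X : Submodule R S, X ≠ ⊥ → θ.val X / η.val X ≤ θ.val S / η.val S) :
    Semistable (θ - (θ.val S / η.val S) • η) S := by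
  have hηS := hη S hS ‹_›
  refine ⟨?_, fun X ↦ ?_⟩
  · simp only [AdditiveInvariant.sub_val, AdditiveInvariant.smul_val]
    field_simp
    ring
  · by_cases hX : X = ⊥
    · have : Subsingleton X := by rw [hX]; infer_instance
      rw [AdditiveInvariant.val_eq_zero_of_subsingleton]
    · have hηX := hη X (hS.of_injective X.injective_subtype)
        (Submodule.nontrivial_iff_ne_bot.mpr hX)
      have h := hss X hX
      rw [div_le_iff₀ hηX] at h
      simp only [AdditiveInvariant.sub_val, AdditiveInvariant.smul_val]
      linarith

variable {μ a : ℝ}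

lemma Semistable.memI_sub_smul (h : Semistable (θ - μ • η) S) (hη : η.IsPositive)
    (hS : IsFiniteLength R S) (ha : a < μ) : MemI (θ - a • η) S := by
  intro N hN
  have hηQ := hη _ (hS.of_surjective N.mkQ_surjective) (Submodule.Quotient.nontrivial_iff.mpr hN)
  have hQ : 0 ≤ (θ - μ • η).val (S ⧸ N) := by
    rw [AdditiveInvariant.val_quotient _ hS, h.1]
    linarith [h.2 N]
  simp only [AdditiveInvariant.sub_val, AdditiveInvariant.smul_val] at hQ ⊢
  linarith [mul_pos (sub_pos.mpr ha) hηQ]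

lemma Semistable.memPbar_sub_smul (h : Semistable (θ - μ • η) S) (hη : η.IsPositive)
    (hS : IsFiniteLength R S) (ha : μ ≤ a) : MemPbar (θ - a • η) S := by
  intro X hX
  have hηX := hη X (hS.of_injective X.injective_subtype) (Submodule.nontrivial_iff_ne_bot.mpr hX)
  have hX := h.2 X
  simp only [AdditiveInvariant.sub_val, AdditiveInvariant.smul_val] at hX ⊢
  linarith [mul_le_mul_of_nonneg_right ha hηX.le]

end Slope

section Filtration

variable {φ : AdditiveInvariant R} {T : Type u} [AddCommGroup T] [Module R T]
  {F : ℕ → Submodule R T}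

lemma nontrivial_quotient_comap_subtype {p q : Submodule R T} (h : p < q) :
    Nontrivial (q ⧸ p.comap q.subtype) :=
  Submodule.Quotient.nontrivial_iff.mpr fun h' ↦ h.not_ge (Submodule.comap_subtype_eq_top.mp h')

lemma memI_of_subquotients (hT : IsFiniteLength R T) (hF0 : F 0 = ⊥) {k : ℕ}
    (hmono : ∀ i < k, F i ≤ F (i + 1))
    (h : ∀ i < k, MemI φ (F (i + 1) ⧸ (F i).comap (F (i + 1)).subtype)) : MemI φ (F k) := by
  induction k with
  | zero =>
    intro N hN
    have : Subsingleton (F 0) := by rw [hF0]; infer_instance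
    exact absurd (Subsingleton.elim N ⊤) hN
  | succ k ih =>
    have hFk := hT.of_injective (F (k + 1)).injective_subtype
    refine MemI.of_extension hFk ?_ (h k k.lt_add_one)
    exact (ih (fun i hi ↦ hmono i (by omega)) fun i hi ↦ h i (by omega)).of_linearEquiv
      (hFk.of_injective (Submodule.injective_subtype _))
      (Submodule.comapSubtypeEquivOfLe (hmono k k.lt_add_one))

lemma memPbar_quotient_of_subquotients (hT : IsFiniteLength R T) {ℓ : ℕ} (hFℓ : F ℓ = ⊤)
    {j : ℕ} (hj : j ≤ ℓ) (hmono : ∀ i, j ≤ i → i < ℓ → F i ≤ F (i + 1))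
    (h : ∀ i, j ≤ i → i < ℓ → MemPbar φ (F (i + 1) ⧸ (F i).comap (F (i + 1)).subtype)) :
    MemPbar φ (T ⧸ F j) := by
  induction hj using Nat.decreasingInduction with
  | self =>
    have : Subsingleton (T ⧸ F ℓ) := Submodule.Quotient.subsingleton_iff.mpr hFℓ
    exact fun X hX ↦ absurd (Subsingleton.elim X ⊥) hX
  | of_succ j hj ih =>
    have hTj := hT.of_surjective (F j).mkQ_surjective
    refine MemPbar.of_extension hTj (G := (F (j + 1)).map (F j).mkQ) ?_ ?_
    · exact (h j le_rfl hj).of_linearEquiv (hTj.of_injective (Submodule.injective_subtype _))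
        (Submodule.quotientComapSubtypeEquivMapMkQ (F j) (F (j + 1))).symm
    · exact (ih (fun i hi ↦ hmono i (by omega)) fun i hi ↦ h i (by omega)).of_linearEquiv
        (hTj.of_surjective (Submodule.mkQ_surjective _))
        (Submodule.quotientQuotientEquivQuotient _ _ (hmono j le_rfl hj))

end Filtration

/-- **Proposition (Harder–Narasimhan filtration vs. torsion pairs).**
Let `θ, η` be additive invariants with `η > 0` on nonzero finite-length modules, and set
`μ(M) = θ(M)/η(M)`. Let `0 = T₀ ⊂ T₁ ⊂ ⋯ ⊂ T_ℓ = T` be a filtration whose subquotients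
are nonzero and semistable, with strictly decreasing slopes. Then for every `a ∈ ℝ`,
letting `k` be the largest index with `μ(T_k/T_{k−1}) > a` (and `k = 0` if no such index
exists), the submodule `T_k` is the torsion submodule of `T` with respect to the torsion
pair `(𝓘_{θ−aη}, 𝓟̄_{θ−aη})`: every nonzero quotient `Q` of `T_k` satisfies
`θ(Q) − a·η(Q) > 0`, and every nonzero submodule `X` of `T/T_k` satisfies
`θ(X) − a·η(X) ≤ 0`. -/
theorem hn_filtration_torsion (R : Type u) [Ring R] (θ η : AdditiveInvariant R)
    (hη : ∀ (M : Type u) [AddCommGroup M] [Module R M],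
      IsFiniteLength R M → Nontrivial M → 0 < η.val M)
    (T : Type u) [AddCommGroup T] [Module R T] (hT : IsFiniteLength R T)
    (ℓ : ℕ) (F : ℕ → Submodule R T)
    (hF0 : F 0 = ⊥) (hFℓ : F ℓ = ⊤)
    (hlt : ∀ i < ℓ, F i < F (i + 1))
    -- each subquotient `T_{i+1}/T_i` is semistable: `μ(X) ≤ μ(T_{i+1}/T_i)` for every
    -- nonzero submodule `X`
    (hss : ∀ i < ℓ, ∀ X : Submodule R
        ((F (i + 1)) ⧸ Submodule.comap (F (i + 1)).subtype (F i)), X ≠ ⊥ →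
      θ.val X / η.val X ≤
        θ.val ((F (i + 1)) ⧸ Submodule.comap (F (i + 1)).subtype (F i)) /
          η.val ((F (i + 1)) ⧸ Submodule.comap (F (i + 1)).subtype (F i)))
    -- the slopes of the subquotients are strictly decreasing
    (hdec : ∀ i, i + 1 < ℓ →
      θ.val ((F (i + 2)) ⧸ Submodule.comap (F (i + 2)).subtype (F (i + 1))) /
          η.val ((F (i + 2)) ⧸ Submodule.comap (F (i + 2)).subtype (F (i + 1))) <
        θ.val ((F (i + 1)) ⧸ Submodule.comap (F (i + 1)).subtype (F i)) /
          η.val ((F (i + 1)) ⧸ Submodule.comap (F (i + 1)).subtype (F i)))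
    (a : ℝ) (k : ℕ) (hkℓ : k ≤ ℓ)
    -- `k` is the largest index with `μ(T_k/T_{k−1}) > a` (and `k = 0` if there is none)
    (hk1 : ∀ j, j + 1 = k →
      a < θ.val ((F k) ⧸ Submodule.comap (F k).subtype (F j)) /
            η.val ((F k) ⧸ Submodule.comap (F k).subtype (F j)))
    (hk2 : k < ℓ →
      θ.val ((F (k + 1)) ⧸ Submodule.comap (F (k + 1)).subtype (F k)) /
          η.val ((F (k + 1)) ⧸ Submodule.comap (F (k + 1)).subtype (F k)) ≤ a) :
    (∀ N : Submodule R (F k), N ≠ ⊤ →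
      0 < θ.val ((F k) ⧸ N) - a * η.val ((F k) ⧸ N)) ∧
    (∀ X : Submodule R (T ⧸ F k), X ≠ ⊥ →
      θ.val X - a * η.val X ≤ 0) := by
  set μ : ℕ → ℝ := fun i ↦
    θ.val ((F (i + 1)) ⧸ Submodule.comap (F (i + 1)).subtype (F i)) /
      η.val ((F (i + 1)) ⧸ Submodule.comap (F (i + 1)).subtype (F i))
  have hμ : AntitoneOn μ (Set.Iio ℓ) :=
    (strictAntiOn_of_add_one_lt Set.ordConnected_Iio fun i _ _ hi ↦ hdec i hi).antitoneOn
  have hfl (i : ℕ) : IsFiniteLength R ((F (i + 1)) ⧸ Submodule.comap (F (i + 1)).subtype (F i)) :=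
    (hT.of_injective (Submodule.injective_subtype _)).of_surjective (Submodule.mkQ_surjective _)
  have hsemistable (i : ℕ) (hi : i < ℓ) :
      Semistable (θ - μ i • η) ((F (i + 1)) ⧸ Submodule.comap (F (i + 1)).subtype (F i)) :=
    have := nontrivial_quotient_comap_subtype (hlt i hi)
    semistable_sub_slope_smul hη (hfl i) (hss i hi)
  show MemI (θ - a • η) (F k) ∧ MemPbar (θ - a • η) (T ⧸ F k)
  refine ⟨memI_of_subquotients hT hF0 (fun i hi ↦ (hlt i (by omega)).le) fun i hi ↦ ?_,
    memPbar_quotient_of_subquotients hT hFℓ hkℓ (fun i _ hi ↦ (hlt i hi).le) fun i hki hi ↦ ?_⟩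
  · obtain ⟨m, rfl⟩ : ∃ m, k = m + 1 := ⟨k - 1, by omega⟩
    refine (hsemistable i (by omega)).memI_sub_smul hη (hfl i) ((hk1 m rfl).trans_le ?_)
    exact hμ (Set.mem_Iio.mpr (by omega)) (Set.mem_Iio.mpr (by omega)) (by omega)
  · exact (hsemistable i hi).memPbar_sub_smul hη (hfl i)
      ((hμ (Set.mem_Iio.mpr (by omega)) hi hki).trans (hk2 (by omega)))
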